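/- arXiv:1109.0368 — 6 statements merged into one kernel-verified Lean document; each statement's English description precedes it below -/
import Mathlib

section
/- Let θ₁, θ₂ ∈ [0,1) be such that the forward orbits O(θ₁) and O(θ₂) under the doubling map D are different sets, and such that for each i ∈ {1,2}, either O(θᵢ) is an infinite set or θᵢ is a periodic point of D of minimal period at least 3. Then the two orbits are mixed: there exist real numbers x₁ < x₂ < x₃ < x₄ in [0,1) such that either (x₁ ∈ O(θ₁), x₃ ∈ O(θ₁), x₂ ∈ O(θ₂) and x₄ ∈ O(θ₂)) or (x₁ ∈ O(θ₂), x₃ ∈ O(θ₂), x₂ ∈ O(θ₁) and x₄ ∈ O(θ₁)). -/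
/-!
If the two orbits meet, they share a tail. Two periodic orbits sharing a point coincide;
otherwise one orbit is infinite, hence so is the shared tail, and any four of its points
alternate between the orbits.

If the orbits are disjoint, neither contains the fixed point `0`, and each has a point in
`[0, 1/2)`, where the doubling map is `x ↦ 2x`. Say `0 < a < b < 1/2` with `a` in the first
orbit and `b` in the second. Doubling `a` repeatedly, it first lands in `[b, 2b)`, in fact in
`(b, 2b)` by disjointness, and `2b` lies in the second orbit; so `a < b < 2ⁿa < 2b` interlace
the orbits.
-/

/-- The doubling map on `[0,1)`: `x ↦ Int.fract (2 * x)`. -/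
noncomputable def doubling (x : ℝ) : ℝ := Int.fract (2 * x)

/-- The forward orbit of `θ` under the doubling map. -/
noncomputable def orbitD (θ : ℝ) : Set ℝ := Set.range fun n : ℕ => doubling^[n] θ

open Set Function

namespace Function

variable {α : Type*} (f : α → α)

theorem range_iterate_eq_image_Iio_union (x : α) (m : ℕ) :
    range (fun n => f^[n] x) = (fun n => f^[n] x) '' Iio m ∪ range fun n => f^[n] (f^[m] x) := by
  ext y
  constructor
  · rintro ⟨n, rfl⟩
    rcases lt_or_ge n m with h | h
    · exact Or.inl ⟨n, h, rfl⟩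
    · exact Or.inr ⟨n - m, by simp only [← iterate_add_apply, Nat.sub_add_cancel h]⟩
  · rintro (⟨n, -, rfl⟩ | ⟨n, rfl⟩)
    · exact ⟨n, rfl⟩
    · exact ⟨n + m, iterate_add_apply f n m x⟩

theorem range_iterate_iterate_subset (x : α) (m : ℕ) :
    (range fun n => f^[n] (f^[m] x)) ⊆ range fun n => f^[n] x := by
  rw [range_iterate_eq_image_Iio_union f x m]
  exact subset_union_right

theorem infinite_range_iterate_iterate {x : α} (h : (range fun n => f^[n] x).Infinite) (m : ℕ) :
    (range fun n => f^[n] (f^[m] x)).Infinite := by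
  rw [range_iterate_eq_image_Iio_union f x m, infinite_union] at h
  exact h.resolve_left ((finite_Iio m).image _).not_infinite

theorem range_iterate_of_isFixedPt {x : α} (hx : IsFixedPt f x) :
    (range fun n => f^[n] x) = {x} := by
  simp only [iterate_fixed hx, range_const]

theorem range_iterate_iterate_of_mem_periodicPts {x : α} (hx : x ∈ periodicPts f) (m : ℕ) :
    (range fun n => f^[n] (f^[m] x)) = range fun n => f^[n] x := by
  refine (range_iterate_iterate_subset f x m).antisymm ?_
  set j := minimalPeriod f x * m - m
  have hx_eq : f^[j] (f^[m] x) = x := by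
    rw [← iterate_add_apply, Nat.sub_add_cancel
      (Nat.le_mul_of_pos_left m (minimalPeriod_pos_of_mem_periodicPts hx)),
      ((isPeriodicPt_minimalPeriod f x).mul_const m).eq]
  calc (range fun n => f^[n] x) = range fun n => f^[n] (f^[j] (f^[m] x)) := by rw [hx_eq]
    _ ⊆ range fun n => f^[n] (f^[m] x) := range_iterate_iterate_subset f _ j

theorem range_iterate_eq_or_infinite_inter {x y : α}
    (hxy : ¬Disjoint (range fun n => f^[n] x) (range fun n => f^[n] y))
    (hx : (range fun n => f^[n] x).Infinite ∨ x ∈ periodicPts f)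
    (hy : (range fun n => f^[n] y).Infinite ∨ y ∈ periodicPts f) :
    (range fun n => f^[n] x) = (range fun n => f^[n] y) ∨
      ((range fun n => f^[n] x) ∩ range fun n => f^[n] y).Infinite := by
  obtain ⟨z, ⟨m, rfl⟩, ⟨l, hl : f^[l] y = f^[m] x⟩⟩ := not_disjoint_iff.mp hxy
  have hsub : (range fun n => f^[n] (f^[m] x)) ⊆
      (range fun n => f^[n] x) ∩ range fun n => f^[n] y := by
    refine subset_inter (range_iterate_iterate_subset f x m) ?_
    rw [← hl]
    exact range_iterate_iterate_subset f y l
  rcases hx with hx | hx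
  · exact Or.inr ((infinite_range_iterate_iterate f hx m).mono hsub)
  rcases hy with hy | hy
  · refine Or.inr (Infinite.mono hsub ?_)
    rw [← hl]
    exact infinite_range_iterate_iterate f hy l
  · left
    rw [← range_iterate_iterate_of_mem_periodicPts f hx m,
      ← range_iterate_iterate_of_mem_periodicPts f hy l, hl]

end Function

lemma doubling_mem_Ico (x : ℝ) : doubling x ∈ Ico (0 : ℝ) 1 :=
  ⟨Int.fract_nonneg _, Int.fract_lt_one _⟩

lemma doubling_of_lt_half {x : ℝ} (h0 : 0 ≤ x) (h : x < 1 / 2) : doubling x = 2 * x :=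
  Int.fract_eq_self.mpr ⟨by linarith, by linarith⟩

lemma doubling_of_half_le {x : ℝ} (h0 : 1 / 2 ≤ x) (h : x < 1) : doubling x = 2 * x - 1 := by
  rw [doubling, ← Int.fract_sub_one, Int.fract_eq_self.mpr ⟨by linarith, by linarith⟩]

lemma isFixedPt_doubling_zero : IsFixedPt doubling 0 := by
  simp [IsFixedPt, doubling]

lemma mapsTo_doubling_orbitD (θ : ℝ) : MapsTo doubling (orbitD θ) (orbitD θ) := by
  rintro _ ⟨n, rfl⟩
  exact ⟨n + 1, iterate_succ_apply' doubling n θ⟩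

lemma orbitD_subset_Ico {θ : ℝ} (hθ : θ ∈ Ico (0 : ℝ) 1) : orbitD θ ⊆ Ico (0 : ℝ) 1 := by
  rintro _ ⟨_ | n, rfl⟩
  · exact hθ
  · simpa only [iterate_succ_apply'] using doubling_mem_Ico _

lemma zero_notMem_orbitD {θ : ℝ}
    (hθ : (orbitD θ).Infinite ∨ (θ ∈ periodicPts doubling ∧ 3 ≤ minimalPeriod doubling θ)) :
    (0 : ℝ) ∉ orbitD θ := by
  rintro ⟨m, hm : doubling^[m] θ = 0⟩
  rcases hθ with hinf | ⟨hper, hmin⟩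
  · have htail := infinite_range_iterate_iterate doubling hinf m
    rw [hm, range_iterate_of_isFixedPt doubling isFixedPt_doubling_zero] at htail
    exact htail (finite_singleton 0)
  · have hperiod := minimalPeriod_apply_iterate hper m
    rw [hm, minimalPeriod_eq_one_iff_isFixedPt.mpr isFixedPt_doubling_zero] at hperiod
    omega

lemma pos_of_mem_orbitD {θ x : ℝ} (hθ : θ ∈ Ico (0 : ℝ) 1) (h0 : (0 : ℝ) ∉ orbitD θ)
    (hx : x ∈ orbitD θ) : 0 < x :=
  (orbitD_subset_Ico hθ hx).1.lt_of_ne fun h => h0 (h ▸ hx)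

lemma exists_mem_orbitD_lt_half {θ : ℝ} (hθ : θ ∈ Ico (0 : ℝ) 1) :
    ∃ a ∈ orbitD θ, a < 1 / 2 := by
  by_contra! hge
  have hdist : ∀ n : ℕ, 1 - doubling^[n] θ = 2 ^ n * (1 - θ) := by
    intro n
    induction n with
    | zero => simp
    | succ n ih =>
      rw [iterate_succ_apply', doubling_of_half_le (hge _ ⟨n, rfl⟩)
        (orbitD_subset_Ico hθ ⟨n, rfl⟩).2, pow_succ]
      linarith
  obtain ⟨n, hn⟩ := pow_unbounded_of_one_lt (1 / (1 - θ)) one_lt_two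
  rw [div_lt_iff₀ (by linarith [hθ.2])] at hn
  linarith [hdist n, hge _ ⟨n, rfl⟩]

lemma exists_iterate_doubling_mem_Ico {a b : ℝ} (ha : 0 < a) (hab : a < b) (hb : b < 1 / 2) :
    ∃ n, doubling^[n] a ∈ Ico b (2 * b) := by
  obtain ⟨N, hN⟩ := pow_unbounded_of_one_lt (b / a) one_lt_two
  rw [div_lt_iff₀ ha] at hN
  induction N generalizing a with
  | zero => linarith
  | succ N ih =>
    have hda : doubling a = 2 * a := doubling_of_lt_half ha.le (by linarith)
    by_cases hba : b ≤ 2 * a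
    · exact ⟨1, by simpa [hda] using ⟨hba, by linarith⟩⟩
    · obtain ⟨n, hn⟩ := ih (by linarith) (not_le.mp hba) (by rw [pow_succ] at hN; linarith)
      exact ⟨n + 1, by rwa [iterate_succ_apply, hda]⟩

def Interlaced (A B : Set ℝ) : Prop :=
  ∃ x₁ x₂ x₃ x₄ : ℝ, x₁ < x₂ ∧ x₂ < x₃ ∧ x₃ < x₄ ∧ x₁ ∈ A ∧ x₂ ∈ B ∧ x₃ ∈ A ∧ x₄ ∈ B

lemma interlaced_of_infinite {A B S : Set ℝ} (hS : S.Infinite) (hA : S ⊆ A) (hB : S ⊆ B) :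
    Interlaced A B := by
  obtain ⟨t, hts, hcard⟩ := hS.exists_subset_card_eq 4
  let x := t.orderEmbOfFin hcard
  have hx : ∀ i, x i ∈ S := fun i => hts (t.orderEmbOfFin_mem hcard i)
  exact ⟨x 0, x 1, x 2, x 3, x.strictMono (by decide), x.strictMono (by decide),
    x.strictMono (by decide), hA (hx 0), hB (hx 1), hA (hx 2), hB (hx 3)⟩

lemma interlaced_of_lt {A B : Set ℝ} (hA : MapsTo doubling A A) (hB : MapsTo doubling B B)
    (hAB : Disjoint A B) {a b : ℝ} (ha : a ∈ A) (hb : b ∈ B) (ha0 : 0 < a) (hab : a < b)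
    (hb2 : b < 1 / 2) : Interlaced A B := by
  obtain ⟨n, hbn, hn2b⟩ := exists_iterate_doubling_mem_Ico ha0 hab hb2
  have hnA : doubling^[n] a ∈ A := hA.iterate n ha
  have h2b : 2 * b ∈ B := doubling_of_lt_half (by linarith) hb2 ▸ hB hb
  exact ⟨a, b, _, 2 * b, hab, hbn.lt_of_ne (hAB.ne_of_mem hnA hb).symm, hn2b, ha, hb, hnA, h2b⟩

lemma interlaced_or_interlaced_of_disjoint {θ₁ θ₂ : ℝ}
    (h₁ : θ₁ ∈ Ico (0 : ℝ) 1) (h₂ : θ₂ ∈ Ico (0 : ℝ) 1)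
    (h0₁ : (0 : ℝ) ∉ orbitD θ₁) (h0₂ : (0 : ℝ) ∉ orbitD θ₂)
    (hdisj : Disjoint (orbitD θ₁) (orbitD θ₂)) :
    Interlaced (orbitD θ₁) (orbitD θ₂) ∨ Interlaced (orbitD θ₂) (orbitD θ₁) := by
  obtain ⟨a, ha, ha2⟩ := exists_mem_orbitD_lt_half h₁
  obtain ⟨b, hb, hb2⟩ := exists_mem_orbitD_lt_half h₂
  rcases (hdisj.ne_of_mem ha hb).lt_or_gt with hab | hba
  · exact Or.inl (interlaced_of_lt (mapsTo_doubling_orbitD θ₁) (mapsTo_doubling_orbitD θ₂)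
      hdisj ha hb (pos_of_mem_orbitD h₁ h0₁ ha) hab hb2)
  · exact Or.inr (interlaced_of_lt (mapsTo_doubling_orbitD θ₂) (mapsTo_doubling_orbitD θ₁)
      hdisj.symm hb ha (pos_of_mem_orbitD h₂ h0₂ hb) hba ha2)

theorem stmt_3 (θ₁ θ₂ : ℝ)
    (h₁ : θ₁ ∈ Set.Ico (0:ℝ) 1) (h₂ : θ₂ ∈ Set.Ico (0:ℝ) 1)
    (hne : orbitD θ₁ ≠ orbitD θ₂)
    (hcond : ∀ θ ∈ ({θ₁, θ₂} : Set ℝ),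
      (orbitD θ).Infinite ∨
        (θ ∈ Function.periodicPts doubling ∧ 3 ≤ Function.minimalPeriod doubling θ)) :
    ∃ x₁ x₂ x₃ x₄ : ℝ,
      x₁ < x₂ ∧ x₂ < x₃ ∧ x₃ < x₄ ∧
      x₁ ∈ Set.Ico (0:ℝ) 1 ∧ x₂ ∈ Set.Ico (0:ℝ) 1 ∧
      x₃ ∈ Set.Ico (0:ℝ) 1 ∧ x₄ ∈ Set.Ico (0:ℝ) 1 ∧
      ((x₁ ∈ orbitD θ₁ ∧ x₃ ∈ orbitD θ₁ ∧ x₂ ∈ orbitD θ₂ ∧ x₄ ∈ orbitD θ₂) ∨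
       (x₁ ∈ orbitD θ₂ ∧ x₃ ∈ orbitD θ₂ ∧ x₂ ∈ orbitD θ₁ ∧ x₄ ∈ orbitD θ₁)) := by
  have hc₁ := hcond θ₁ (by simp)
  have hc₂ := hcond θ₂ (by simp)
  have hsub₁ := orbitD_subset_Ico h₁
  have hsub₂ := orbitD_subset_Ico h₂
  suffices h : Interlaced (orbitD θ₁) (orbitD θ₂) ∨ Interlaced (orbitD θ₂) (orbitD θ₁) by
    rcases h with ⟨x₁, x₂, x₃, x₄, h₁₂, h₂₃, h₃₄, m₁, m₂, m₃, m₄⟩ |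
      ⟨x₁, x₂, x₃, x₄, h₁₂, h₂₃, h₃₄, m₁, m₂, m₃, m₄⟩
    · exact ⟨x₁, x₂, x₃, x₄, h₁₂, h₂₃, h₃₄, hsub₁ m₁, hsub₂ m₂, hsub₁ m₃, hsub₂ m₄,
        Or.inl ⟨m₁, m₃, m₂, m₄⟩⟩
    · exact ⟨x₁, x₂, x₃, x₄, h₁₂, h₂₃, h₃₄, hsub₂ m₁, hsub₁ m₂, hsub₂ m₃, hsub₁ m₄,
        Or.inr ⟨m₁, m₃, m₂, m₄⟩⟩
  by_cases hdisj : Disjoint (orbitD θ₁) (orbitD θ₂)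
  · exact interlaced_or_interlaced_of_disjoint h₁ h₂ (zero_notMem_orbitD hc₁)
      (zero_notMem_orbitD hc₂) hdisj
  · rcases range_iterate_eq_or_infinite_inter doubling hdisj (hc₁.imp_right And.left)
      (hc₂.imp_right And.left) with heq | hinf
    · exact absurd heq hne
    · exact Or.inl (interlaced_of_infinite hinf inter_subset_left inter_subset_right)
end

section
/- Let θ ∈ [0,1) and suppose that either the forward orbit O(θ) under the doubling map D is an infinite set, or θ is a periodic point of D of minimal period at least 3. Then O(θ) contains a point in [1/4, 1/2), a point in [1/2, 3/4), and a point in [0, 1/4) ∪ [3/4, 1). -/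
lemma doubling_mem (x : ℝ) : doubling x ∈ Set.Ico (0:ℝ) 1 :=
  ⟨Int.fract_nonneg _, Int.fract_lt_one _⟩

lemma iter_mem {θ : ℝ} (hθ : θ ∈ Set.Ico (0:ℝ) 1) (n : ℕ) :
    doubling^[n] θ ∈ Set.Ico (0:ℝ) 1 := by
  cases n with
  | zero => exact hθ
  | succ n => rw [Function.iterate_succ_apply']; exact doubling_mem _

lemma doubling_lo {x : ℝ} (h0 : 0 ≤ x) (h : x < 1/2) : doubling x = 2 * x :=
  Int.fract_eq_self.2 ⟨by linarith, by linarith⟩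

lemma doubling_hi {x : ℝ} (h0 : 1/2 ≤ x) (h : x < 1) : doubling x = 2 * x - 1 := by
  unfold doubling
  have h1 : (2*x : ℝ) = (2*x - 1) + (1:ℤ) := by push_cast; ring
  rw [h1, Int.fract_add_intCast, Int.fract_eq_self.2 ⟨by linarith, by linarith⟩]
  push_cast; ring

lemma doubling_zero : doubling 0 = 0 := by unfold doubling; norm_num

lemma iter_zero (m : ℕ) : doubling^[m] (0:ℝ) = 0 := by
  induction m with
  | zero => rfl
  | succ m ih => rw [Function.iterate_succ_apply', ih, doubling_zero]

/-- If some iterate is zero, the hypotheses fail. -/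
lemma zero_case (θ : ℝ) (N : ℕ) (h0 : doubling^[N] θ = 0)
    (hcond : (orbitD θ).Infinite ∨
      (θ ∈ Function.periodicPts doubling ∧ 3 ≤ Function.minimalPeriod doubling θ)) : False := by
  have htail : ∀ m, N ≤ m → doubling^[m] θ = 0 := by
    intro m hm
    obtain ⟨k, rfl⟩ := Nat.exists_eq_add_of_le hm
    rw [Nat.add_comm, Function.iterate_add_apply, h0, iter_zero]
  rcases hcond with hinf | ⟨hper, hmin⟩
  · apply hinf
    apply Set.Finite.subset (((Set.finite_Iic N).image (fun n => doubling^[n] θ)).insert 0)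
    rintro _ ⟨n, rfl⟩
    by_cases hn : n ≤ N
    · exact Set.mem_insert_iff.2 (Or.inr ⟨n, hn, rfl⟩)
    · exact Set.mem_insert_iff.2 (Or.inl (htail n (le_of_not_ge hn)))
  · obtain ⟨n, hn0, hp⟩ := hper
    have h1 : doubling^[n * (N+1)] θ = θ := hp.mul_const (N+1)
    have h2 : N ≤ n * (N+1) := by nlinarith
    have hθ0 : θ = 0 := by rw [← h1]; exact htail _ h2
    have hfix : Function.IsPeriodicPt doubling 1 θ := by
      simp [Function.IsPeriodicPt, Function.IsFixedPt, hθ0, doubling_zero]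
    have := hfix.minimalPeriod_le one_pos
    omega

/-- If the tail of the orbit from `N` stays below `1/2`, then the `N`-th iterate is `0`. -/
lemma low_tail {θ : ℝ} (hθ : θ ∈ Set.Ico (0:ℝ) 1) (N : ℕ)
    (h : ∀ k, doubling^[N+k] θ < 1/2) : doubling^[N] θ = 0 := by
  have heq : ∀ k, doubling^[N+k] θ = 2^k * doubling^[N] θ := by
    intro k
    induction k with
    | zero => simp
    | succ k ih =>
      rw [← Nat.add_assoc, Function.iterate_succ_apply',
        doubling_lo (iter_mem hθ _).1 (h k), ih]
      ring
  by_contra hne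
  have hpos : 0 < doubling^[N] θ := lt_of_le_of_ne (iter_mem hθ N).1 (Ne.symm hne)
  obtain ⟨k, hk⟩ := pow_unbounded_of_one_lt ((1:ℝ) / doubling^[N] θ) (by norm_num : (1:ℝ) < 2)
  have := h k
  rw [heq k] at this
  rw [div_lt_iff₀ hpos] at hk
  nlinarith

/-- The tail of the orbit cannot stay in `[1/2,1)` forever. -/
lemma high_escape {θ : ℝ} (hθ : θ ∈ Set.Ico (0:ℝ) 1) (N : ℕ) :
    ¬ ∀ k, 1/2 ≤ doubling^[N+k] θ := by
  intro h
  have heq : ∀ k, 1 - doubling^[N+k] θ = 2^k * (1 - doubling^[N] θ) := by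
    intro k
    induction k with
    | zero => simp
    | succ k ih =>
      rw [← Nat.add_assoc, Function.iterate_succ_apply',
        doubling_hi (h k) (iter_mem hθ _).2]
      rw [pow_succ]; nlinarith [ih]
  have hpos : 0 < 1 - doubling^[N] θ := by linarith [(iter_mem hθ N).2]
  obtain ⟨k, hk⟩ := pow_unbounded_of_one_lt ((1:ℝ) / (1 - doubling^[N] θ)) (by norm_num : (1:ℝ) < 2)
  rw [div_lt_iff₀ hpos] at hk
  have h1 := heq k
  have h2 := (iter_mem hθ (N+k)).1
  nlinarith

theorem stmt_4 (θ : ℝ) (hθ : θ ∈ Set.Ico (0:ℝ) 1)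
    (hcond : (orbitD θ).Infinite ∨
      (θ ∈ Function.periodicPts doubling ∧ 3 ≤ Function.minimalPeriod doubling θ)) :
    (∃ x ∈ orbitD θ, x ∈ Set.Ico (1/4 : ℝ) (1/2)) ∧
    (∃ x ∈ orbitD θ, x ∈ Set.Ico (1/2 : ℝ) (3/4)) ∧
    (∃ x ∈ orbitD θ, x ∈ Set.Ico (0 : ℝ) (1/4) ∪ Set.Ico (3/4 : ℝ) 1) := by
  classical
  refine ⟨?_, ?_, ?_⟩
  · -- point in [1/4, 1/2)
    -- find n1 with iterate < 1/2
    have hn1 : ∃ k, doubling^[k] θ < 1/2 := by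
      by_contra hc
      push_neg at hc
      exact high_escape hθ 0 (fun k => by simpa using hc k)
    obtain ⟨n1, hn1⟩ := hn1
    -- find later point ≥ 1/2
    have hex : ∃ m, 1/2 ≤ doubling^[n1+1+m] θ := by
      by_contra hc
      push_neg at hc
      have hall : ∀ k, doubling^[n1+k] θ < 1/2 := by
        intro k
        cases k with
        | zero => simpa using hn1
        | succ k => have := hc k; rwa [show n1+1+k = n1+(k+1) by ring] at this
      exact zero_case θ n1 (low_tail hθ n1 hall) hcond
    set k0 := Nat.find hex with hk0
    have hspec : 1/2 ≤ doubling^[n1+1+k0] θ := Nat.find_spec hex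
    have hprev : doubling^[n1+k0] θ < 1/2 := by
      cases' Nat.eq_zero_or_pos k0 with h h
      · rw [h]; simpa using hn1
      · have := Nat.find_min hex (show k0 - 1 < k0 by omega)
        push_neg at this
        rwa [show n1+k0 = n1+1+(k0-1) by omega]
    refine ⟨doubling^[n1+k0] θ, ⟨n1+k0, rfl⟩, ?_, hprev⟩
    -- x(n+1) = 2 x n ≥ 1/2
    have hstep : doubling^[n1+1+k0] θ = 2 * doubling^[n1+k0] θ := by
      rw [show n1+1+k0 = (n1+k0)+1 by ring, Function.iterate_succ_apply',
        doubling_lo (iter_mem hθ _).1 hprev]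
    rw [hstep] at hspec
    linarith
  · -- point in [1/2, 3/4)
    have hn0 : ∃ k, 1/2 ≤ doubling^[k] θ := by
      by_contra hc
      push_neg at hc
      exact zero_case θ 0 (low_tail hθ 0 (fun k => by simpa using hc k)) hcond
    obtain ⟨n0, hn0⟩ := hn0
    have hex : ∃ m, doubling^[n0+m] θ < 1/2 := by
      by_contra hc
      push_neg at hc
      exact high_escape hθ n0 hc
    set k0 := Nat.find hex with hk0
    have hspec : doubling^[n0+k0] θ < 1/2 := Nat.find_spec hex
    have hk0pos : 0 < k0 := by
      rcases Nat.eq_zero_or_pos k0 with h | h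
      · rw [h] at hspec; simp at hspec; linarith
      · exact h
    have hprev : 1/2 ≤ doubling^[n0+(k0-1)] θ := by
      have := Nat.find_min hex (show k0 - 1 < k0 by omega)
      push_neg at this
      exact this
    refine ⟨doubling^[n0+(k0-1)] θ, ⟨n0+(k0-1), rfl⟩, hprev, ?_⟩
    have hstep : doubling^[n0+k0] θ = 2 * doubling^[n0+(k0-1)] θ - 1 := by
      rw [show n0+k0 = (n0+(k0-1))+1 by omega, Function.iterate_succ_apply',
        doubling_hi hprev (iter_mem hθ _).2]
    rw [hstep] at hspec
    linarith
  · -- point in [0,1/4) ∪ [3/4,1)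
    by_contra hc
    push_neg at hc
    have hall : ∀ n, 1/4 ≤ doubling^[n] θ ∧ doubling^[n] θ < 3/4 := by
      intro n
      have h1 := hc _ ⟨n, rfl⟩
      have h2 := iter_mem hθ n
      simp only [Set.mem_union, Set.mem_Ico, not_or, not_and, not_lt] at h1
      obtain ⟨ha, hb⟩ := h1
      constructor
      · by_cases h : doubling^[n] θ < 1/4
        · exact absurd (ha h2.1) (not_le.2 h)
        · linarith [not_lt.1 h]
      · by_cases h : 3/4 ≤ doubling^[n] θ
        · linarith [hb h, h2.2]
        · linarith [not_le.1 h]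
    -- two symmetric cases
    have key : θ = 1/3 ∨ θ = 2/3 := by
      by_cases hhalf : θ < 1/2
      · left
        have claim : ∀ n, doubling^[2*n] θ < 1/2 ∧
            doubling^[2*n] θ - 1/3 = 4^n * (θ - 1/3) := by
          intro n
          induction n with
          | zero => simpa using hhalf
          | succ n ih =>
            obtain ⟨ihh, ihe⟩ := ih
            have h14 := (hall (2*n)).1
            have hmid : doubling^[2*n+1] θ = 2 * doubling^[2*n] θ := by
              rw [Function.iterate_succ_apply', doubling_lo (iter_mem hθ _).1 ihh]
            have hmid34 := (hall (2*n+1)).2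
            have hmid12 : 1/2 ≤ doubling^[2*n+1] θ := by rw [hmid]; linarith
            have hnext : doubling^[2*(n+1)] θ = 2 * doubling^[2*n+1] θ - 1 := by
              rw [show 2*(n+1) = (2*n+1)+1 by ring, Function.iterate_succ_apply',
                doubling_hi hmid12 (iter_mem hθ _).2]
            constructor
            · rw [hnext]; linarith
            · rw [hnext, hmid, pow_succ]; nlinarith [ihe]
        by_contra hne
        have hd : (0:ℝ) < |θ - 1/3| := abs_pos.2 (sub_ne_zero.2 hne)
        obtain ⟨n, hn⟩ := pow_unbounded_of_one_lt ((1:ℝ) / |θ - 1/3|) (by norm_num : (1:ℝ) < 4)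
        rw [div_lt_iff₀ hd] at hn
        have h1 := (claim n).2
        have h2 := (hall (2*n)).1
        have h3 := (hall (2*n)).2
        have habs : |doubling^[2*n] θ - 1/3| < 1 := by
          rw [abs_lt]; constructor <;> linarith
        rw [h1, abs_mul, abs_pow] at habs
        simp only [abs_of_nonneg (by norm_num : (0:ℝ) ≤ 4)] at habs
        nlinarith
      · right
        push_neg at hhalf
        have claim : ∀ n, 1/2 ≤ doubling^[2*n] θ ∧
            doubling^[2*n] θ - 2/3 = 4^n * (θ - 2/3) := by
          intro n
          induction n with
          | zero => simpa using hhalf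
          | succ n ih =>
            obtain ⟨ihh, ihe⟩ := ih
            have h34 := (hall (2*n)).2
            have hmid : doubling^[2*n+1] θ = 2 * doubling^[2*n] θ - 1 := by
              rw [Function.iterate_succ_apply', doubling_hi ihh (iter_mem hθ _).2]
            have hmid14 := (hall (2*n+1)).1
            have hmid12 : doubling^[2*n+1] θ < 1/2 := by rw [hmid]; linarith
            have hnext : doubling^[2*(n+1)] θ = 2 * doubling^[2*n+1] θ := by
              rw [show 2*(n+1) = (2*n+1)+1 by ring, Function.iterate_succ_apply',
                doubling_lo (iter_mem hθ _).1 hmid12]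
            constructor
            · rw [hnext]; linarith
            · rw [hnext, hmid, pow_succ]; nlinarith [ihe]
        by_contra hne
        have hd : (0:ℝ) < |θ - 2/3| := abs_pos.2 (sub_ne_zero.2 hne)
        obtain ⟨n, hn⟩ := pow_unbounded_of_one_lt ((1:ℝ) / |θ - 2/3|) (by norm_num : (1:ℝ) < 4)
        rw [div_lt_iff₀ hd] at hn
        have h1 := (claim n).2
        have h2 := (hall (2*n)).1
        have h3 := (hall (2*n)).2
        have habs : |doubling^[2*n] θ - 2/3| < 1 := by
          rw [abs_lt]; constructor <;> linarith
        rw [h1, abs_mul, abs_pow] at habs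
        simp only [abs_of_nonneg (by norm_num : (0:ℝ) ≤ 4)] at habs
        nlinarith
    -- θ ∈ {1/3, 2/3}: contradiction with hcond
    have d13 : doubling (1/3) = 2/3 := by
      rw [doubling_lo (by norm_num) (by norm_num)]; norm_num
    have d23 : doubling (2/3) = 1/3 := by
      rw [doubling_hi (by norm_num) (by norm_num)]; norm_num
    have horb : ∀ n, doubling^[n] θ = 1/3 ∨ doubling^[n] θ = 2/3 := by
      intro n
      induction n with
      | zero => simpa using key
      | succ n ih =>
        rw [Function.iterate_succ_apply']
        rcases ih with h | h <;> rw [h]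
        · right; exact d13
        · left; exact d23
    rcases hcond with hinf | ⟨_, hmin⟩
    · apply hinf
      apply Set.Finite.subset ((Set.finite_singleton (2/3 : ℝ)).insert (1/3))
      rintro _ ⟨n, rfl⟩
      rcases horb n with h | h
      · exact Set.mem_insert_iff.2 (Or.inl h)
      · exact Set.mem_insert_iff.2 (Or.inr h)
    · have hp2 : Function.IsPeriodicPt doubling 2 θ := by
        show doubling^[2] θ = θ
        have h2 : ∀ y : ℝ, doubling^[2] y = doubling (doubling y) := by
          intro y
          rw [show (2:ℕ) = 1+1 from rfl, Function.iterate_add_apply,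
            Function.iterate_one]
        rcases key with h | h <;> rw [h, h2]
        · rw [d13, d23]
        · rw [d23, d13]
      have := hp2.minimalPeriod_le two_pos
      omega
end

section
/- Let θ ∈ [0,1). If D^[n](θ) ∈ [1/4, 3/4) for every n ∈ ℕ (including n = 0), then θ = 1/3 or θ = 2/3. -/
noncomputable def derr (x : ℝ) : ℝ := if x < 1/2 then x - 1/3 else x - 2/3

lemma derr_abs {x : ℝ} (hx : x ∈ Set.Ico (1/4 : ℝ) (3/4)) : |derr x| ≤ 1/6 := by
  obtain ⟨h1, h2⟩ := hx
  unfold derr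
  split <;> rw [abs_le] <;> constructor <;> linarith

lemma derr_double {x : ℝ} (hx : x ∈ Set.Ico (1/4 : ℝ) (3/4))
    (hdx : doubling x ∈ Set.Ico (1/4 : ℝ) (3/4)) :
    derr (doubling x) = 2 * derr x := by
  obtain ⟨h1, h2⟩ := hx
  by_cases hc : x < 1/2
  · have hd : doubling x = 2 * x := by
      unfold doubling
      rw [Int.fract_eq_self.mpr ⟨by linarith, by linarith⟩]
    rw [hd] at hdx ⊢
    obtain ⟨hd1, hd2⟩ := hdx
    unfold derr
    rw [if_neg (by linarith), if_pos hc]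
    ring
  · push_neg at hc
    have hd : doubling x = 2 * x - 1 := by
      unfold doubling
      have : Int.fract (2 * x) = Int.fract (2 * x - (1 : ℤ)) := (Int.fract_sub_intCast _ _).symm
      rw [this, Int.fract_eq_self.mpr ⟨by push_cast; linarith, by push_cast; linarith⟩]
      push_cast; ring
    rw [hd] at hdx ⊢
    obtain ⟨hd1, hd2⟩ := hdx
    unfold derr
    rw [if_pos (by linarith), if_neg (by push_neg; linarith)]
    ring

theorem stmt_5 (θ : ℝ) (hθ : θ ∈ Set.Ico (0:ℝ) 1)
    (h : ∀ n : ℕ, doubling^[n] θ ∈ Set.Ico (1/4 : ℝ) (3/4)) :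
    θ = 1/3 ∨ θ = 2/3 := by
  have key : ∀ n : ℕ, derr (doubling^[n] θ) = 2 ^ n * derr θ := by
    intro n
    induction n with
    | zero => simp
    | succ n ih =>
      rw [Function.iterate_succ_apply', derr_double (h n)]
      · rw [ih]; ring
      · have := h (n + 1)
        rwa [Function.iterate_succ_apply'] at this
  have hzero : derr θ = 0 := by
    by_contra hne
    have hpos : 0 < |derr θ| := abs_pos.mpr hne
    obtain ⟨n, hn⟩ := pow_unbounded_of_one_lt ((1/6) / |derr θ|) (by norm_num : (1:ℝ) < 2)
    have hb : |derr (doubling^[n] θ)| ≤ 1/6 := derr_abs (h n)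
    rw [key n, abs_mul, abs_pow, abs_two] at hb
    have : (1/6) / |derr θ| < 2 ^ n := hn
    have := (div_lt_iff₀ hpos).mp this
    linarith
  have h0 := h 0
  simp only [Function.iterate_zero, id] at h0
  unfold derr at hzero
  by_cases hc : θ < 1/2
  · left; rw [if_pos hc] at hzero; linarith
  · right; rw [if_neg hc] at hzero; linarith
end

section
/- Let θ ∈ ℝ. If the sequence n ↦ (2^n · θ), viewed in the circle AddCircle (1 : ℝ) (i.e., the orbit of θ under the doubling map on ℝ/ℤ), converges to some point of AddCircle 1 as n → ∞, then there exists n ∈ ℕ and k ∈ ℤ with 2^n · θ = k; that is, θ is a dyadic rational, whose orbit is eventually the fixed point 0. -/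
lemma norm_double_lt {x : ℝ} (hx : ‖(x : AddCircle (1:ℝ))‖ < 1/4) :
    ‖((2*x : ℝ) : AddCircle (1:ℝ))‖ = 2 * ‖(x : AddCircle (1:ℝ))‖ := by
  have h1 : ‖(x : AddCircle (1:ℝ))‖ = |x - round x| := by
    rw [AddCircle.norm_eq]; norm_num
  set y : ℝ := x - round x with hy
  have hxy : ((2*x : ℝ) : AddCircle (1:ℝ)) = ((2*y : ℝ) : AddCircle (1:ℝ)) := by
    have : (2*x : ℝ) - 2*y = ((2 * round x : ℤ) : ℝ) := by push_cast; ring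
    have h0 : (((2*x : ℝ) - 2*y : ℝ) : AddCircle (1:ℝ)) = 0 := by
      rw [this, AddCircle.coe_eq_zero_iff]
      exact ⟨2 * round x, by simp⟩
    rw [QuotientAddGroup.mk_sub] at h0
    exact sub_eq_zero.mp h0
  rw [hxy]
  have habs : |y| < 1/4 := by rw [h1] at hx; exact hx
  have h2 : ‖((2*y : ℝ) : AddCircle (1:ℝ))‖ = |2*y| := by
    rw [AddCircle.norm_coe_eq_abs_iff _ one_ne_zero]
    rw [abs_mul]
    simp only [abs_one]
    rw [abs_two]
    linarith [abs_nonneg y]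
  rw [h2, abs_mul, abs_two, h1]

theorem stmt_7 (θ : ℝ)
    (h : ∃ L : AddCircle (1:ℝ),
      Filter.Tendsto (fun n : ℕ => (((2:ℝ)^n * θ : ℝ) : AddCircle (1:ℝ)))
        Filter.atTop (nhds L)) :
    ∃ (n : ℕ) (k : ℤ), (2:ℝ)^n * θ = k := by
  obtain ⟨L, hL⟩ := h
  set x : ℕ → AddCircle (1:ℝ) := fun n => (((2:ℝ)^n * θ : ℝ) : AddCircle (1:ℝ)) with hxdef
  have hstep : ∀ n, x (n+1) = x n + x n := by
    intro n
    show (((2:ℝ)^(n+1) * θ : ℝ) : AddCircle (1:ℝ)) = _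
    rw [← QuotientAddGroup.mk_add]
    congr 1
    ring
  -- limit is 0
  have hL2 : Filter.Tendsto (fun n => x n + x n) Filter.atTop (nhds (L + L)) :=
    hL.add hL
  have hL1 : Filter.Tendsto (fun n => x (n+1)) Filter.atTop (nhds L) :=
    hL.comp (Filter.tendsto_add_atTop_nat 1)
  have hLL : L + L = L := by
    apply tendsto_nhds_unique _ hL1
    simpa only [hstep] using hL2
  have hL0 : L = 0 := by
    have := add_right_cancel (a := L) (b := L) (c := 0) (by simpa using hLL)
    exact this
  subst hL0
  have hnorm : Filter.Tendsto (fun n => ‖x n‖) Filter.atTop (nhds 0) := by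
    rw [tendsto_zero_iff_norm_tendsto_zero] at hL
    exact hL
  have hev : ∀ᶠ n in Filter.atTop, ‖x n‖ < 1/4 :=
    hnorm.eventually (Filter.Tendsto.eventually_lt_const (by norm_num) Filter.tendsto_id)
  obtain ⟨N, hN⟩ := hev.exists_forall_of_atTop
  -- claim x N = 0
  have hd : ∀ k, ‖x (N + k)‖ = 2^k * ‖x N‖ := by
    intro k
    induction k with
    | zero => simp
    | succ k ih =>
      have hlt : ‖x (N + k)‖ < 1/4 := hN _ (Nat.le_add_right _ _)
      have : x (N + (k+1)) = (((2 * ((2:ℝ)^(N+k) * θ) : ℝ)) : AddCircle (1:ℝ)) := by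
        show (((2:ℝ)^(N+(k+1)) * θ : ℝ) : AddCircle (1:ℝ)) = _
        congr 1; ring
      rw [this, norm_double_lt hlt, ih]
      show (2:ℝ) * (2^k * ‖x N‖) = 2^(k+1) * ‖x N‖
      ring
  have hxN : ‖x N‖ = 0 := by
    by_contra hne
    have hpos : 0 < ‖x N‖ := lt_of_le_of_ne (norm_nonneg _) (Ne.symm hne)
    obtain ⟨k, hk⟩ := pow_unbounded_of_one_lt (y := (2:ℝ)) ((1/4) / ‖x N‖) one_lt_two
    have h1 : ‖x (N + k)‖ < 1/4 := hN _ (Nat.le_add_right _ _)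
    rw [hd k] at h1
    have : (1/4 : ℝ) / ‖x N‖ < 2^k := hk
    have := (div_lt_iff₀ hpos).mp this
    linarith
  have hx0 : x N = 0 := norm_eq_zero.mp hxN
  rw [hxdef] at hx0
  have := (AddCircle.coe_eq_zero_iff (1:ℝ)).mp hx0
  obtain ⟨k, hk⟩ := this
  exact ⟨N, k, by simpa using hk.symm⟩
end

section
/- For every c ∈ ℂ, the critical point 0 of the quadratic polynomial z ↦ z² + c is periodic of minimal period exactly 3 (i.e., Function.minimalPeriod (fun z => z^2 + c) 0 = 3) if and only if c³ + 2c² + c + 1 = 0. -/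
/-!
The orbit of the critical point is `0 ↦ c ↦ c² + c ↦ (c² + c)² + c = c (c³ + 2c² + c + 1)`.
Since `3` is prime, `0` has minimal period `3` exactly when it returns after three steps
without being fixed; it is fixed only for `c = 0`, where the cubic takes the value `1`.
-/

open Function

theorem iterate_three_sq_add_zero {R : Type*} [CommSemiring R] (c : R) :
    (fun z : R => z ^ 2 + c)^[3] 0 = c * (c ^ 3 + 2 * c ^ 2 + c + 1) := by
  simp only [iterate_succ, iterate_zero, comp_apply, id]
  ring

theorem isFixedPt_sq_add_zero_iff {R : Type*} [Semiring R] (c : R) :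
    IsFixedPt (fun z : R => z ^ 2 + c) 0 ↔ c = 0 := by
  simp [IsFixedPt]

theorem stmt_13 (c : ℂ) :
    Function.minimalPeriod (fun z : ℂ => z ^ 2 + c) 0 = 3 ↔
      c ^ 3 + 2 * c ^ 2 + c + 1 = 0 := by
  rw [minimalPeriod_eq_prime_iff, IsPeriodicPt, IsFixedPt, iterate_three_sq_add_zero,
    isFixedPt_sq_add_zero_iff]
  constructor
  · rintro ⟨hper, hc⟩
    exact (mul_eq_zero.mp hper).resolve_left hc
  · intro hcubic
    refine ⟨by rw [hcubic, mul_zero], ?_⟩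
    rintro rfl
    norm_num at hcubic
end

section
/- If a ∈ ℂ satisfies a³ − 3a² + 2a − 1 = 0, then the parameter c := −a²(a − 2) satisfies c³ + 2c² + c + 1 = 0; consequently the quadratic polynomial Q(z) = z² − a²(a − 2), to which f_a is conformally conjugate, has a superattracting cycle of period 3 through its critical point 0. -/
/-! The substitution c = -a²(a - 2) carries the fixed-critical-point cubic in a to the
period-three Gleason polynomial c³ + 2c² + c + 1 in c, which is exactly the condition
Q_c³(0) = c · (c³ + 2c² + c + 1) = 0. Since 3 is prime and c ≠ 0, the orbit of 0 has
exact period 3. -/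

open Function

theorem gleason_three_eq_zero_of_fixed_critical {R : Type*} [CommRing R] {a : R}
    (ha : a ^ 3 - 3 * a ^ 2 + 2 * a - 1 = 0) :
    (-(a ^ 2) * (a - 2)) ^ 3 + 2 * (-(a ^ 2) * (a - 2)) ^ 2 + (-(a ^ 2) * (a - 2)) + 1 = 0 := by
  linear_combination (-a ^ 6 + 3 * a ^ 5 - a ^ 4 - 3 * a ^ 2 - 2 * a - 1) * ha

theorem minimalPeriod_sq_add_zero_eq_three {R : Type*} [CommRing R] [Nontrivial R] {c : R}
    (hc : c ^ 3 + 2 * c ^ 2 + c + 1 = 0) :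
    minimalPeriod (fun z : R => z ^ 2 + c) 0 = 3 := by
  apply minimalPeriod_eq_prime
  · show (fun z : R => z ^ 2 + c)^[3] 0 = 0
    simp only [iterate_succ_apply', iterate_zero_apply]
    linear_combination c * hc
  · intro hfix
    have hc0 : c = 0 := by simpa [IsFixedPt] using hfix
    simp [hc0] at hc

theorem stmt_14 (a : ℂ) (ha : a ^ 3 - 3 * a ^ 2 + 2 * a - 1 = 0) :
    (-(a ^ 2) * (a - 2)) ^ 3 + 2 * (-(a ^ 2) * (a - 2)) ^ 2 + (-(a ^ 2) * (a - 2)) + 1 = 0 ∧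
      Function.minimalPeriod (fun z : ℂ => z ^ 2 + -(a ^ 2) * (a - 2)) 0 = 3 :=
  have hc := gleason_three_eq_zero_of_fixed_critical ha
  ⟨hc, minimalPeriod_sq_add_zero_eq_three hc⟩
end
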